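/- arXiv:2605.05812 — 9 statements merged into one kernel-verified Lean document; each statement's English description precedes it below -/
import Mathlib

section
/- Let X be a real-valued random variable on a probability space with finite second moment, E[X] = -μ for some μ ≥ 0, and Var(X) ≤ V for some V > 0. Then E[[X]_+] ≤ V / (2(√(V + μ²) + μ)). -/
open MeasureTheory ProbabilityTheory

/-- Hinge-expectation bound: if `E[X] = -μ` with `μ ≥ 0` and `Var X ≤ V` with `V > 0`,
then `E[[X]₊] ≤ V / (2(√(V + μ²) + μ))`. -/
theorem hinge_expectation_bound {Ω : Type*} [MeasureSpace Ω]
    [IsProbabilityMeasure (ℙ : Measure Ω)]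
    (X : Ω → ℝ) (hX : MemLp X 2 ℙ) (μ V : ℝ) (hμ : 0 ≤ μ) (hV : 0 < V)
    (hmean : (∫ ω, X ω) = -μ) (hvar : variance X ℙ ≤ V) :
    (∫ ω, max (X ω) 0) ≤ V / (2 * (Real.sqrt (V + μ ^ 2) + μ)) := by
  set S := Real.sqrt (V + μ ^ 2) with hSdef
  have hVμ : 0 < V + μ ^ 2 := by positivity
  have hS2 : S ^ 2 = V + μ ^ 2 := Real.sq_sqrt hVμ.le
  have hSpos : 0 < S := Real.sqrt_pos.mpr hVμ
  have hint : Integrable X ℙ := hX.integrable (by norm_num)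
  have habsmem : MemLp (fun ω => |X ω|) 2 ℙ := by
    simpa [Real.norm_eq_abs] using hX.norm
  have hintabs : Integrable (fun ω => |X ω|) ℙ := hint.abs
  -- second moment
  have hXsq : ∫ ω, X ω ^ 2 = variance X ℙ + μ ^ 2 := by
    rw [variance_eq_sub hX, hmean]; simp only [Pi.pow_apply]; ring
  have habsvar : variance (fun ω => |X ω|) ℙ =
      (∫ ω, X ω ^ 2) - (∫ ω, |X ω|) ^ 2 := by
    rw [variance_eq_sub habsmem]
    simp only [Pi.pow_apply, sq_abs]
  have hEabs_sq : (∫ ω, |X ω|) ^ 2 ≤ S ^ 2 := by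
    have := variance_nonneg (fun ω => |X ω|) (ℙ : Measure Ω)
    rw [habsvar] at this
    rw [hS2]
    nlinarith [hXsq, hvar]
  have hEabs : (∫ ω, |X ω|) ≤ S := by
    have h0 : 0 ≤ ∫ ω, |X ω| := integral_nonneg fun ω => abs_nonneg _
    nlinarith
  have hmax : (∫ ω, max (X ω) 0) = ((∫ ω, X ω) + ∫ ω, |X ω|) / 2 := by
    rw [← integral_add hint hintabs, ← integral_div]
    congr 1; ext ω
    rcases le_or_gt (X ω) 0 with h | h
    · rw [max_eq_right h, abs_of_nonpos h]; ring
    · rw [max_eq_left h.le, abs_of_pos h]; ring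
  have hfinal : V / (2 * (S + μ)) = (S - μ) / 2 := by
    rw [div_eq_div_iff (by positivity) (by norm_num)]
    nlinarith
  rw [hmax, hmean, hfinal]
  linarith
end

section
/- Let X be a real-valued random variable on a probability space with finite second moment, E[X] ≤ -m for some m ≥ 0, and Var(X) ≤ V for some V > 0. Then E[[X]_+] ≤ V / (2(√(V + m²) + m)). -/
open MeasureTheory ProbabilityTheory

/-- Hinge-expectation bound with only an upper bound on the mean: if `E[X] ≤ -m` with `m ≥ 0`
and `Var X ≤ V` with `V > 0`, then `E[[X]₊] ≤ V / (2(√(V + m²) + m))`. -/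
theorem hinge_expectation_bound_of_mean_le {Ω : Type*} [MeasureSpace Ω]
    [IsProbabilityMeasure (ℙ : Measure Ω)]
    (X : Ω → ℝ) (hX : MemLp X 2 ℙ) (m V : ℝ) (hm : 0 ≤ m) (hV : 0 < V)
    (hmean : (∫ ω, X ω) ≤ -m) (hvar : variance X ℙ ≤ V) :
    (∫ ω, max (X ω) 0) ≤ V / (2 * (Real.sqrt (V + m ^ 2) + m)) := by
  have hXi : Integrable X ℙ := hX.integrable one_le_two
  have hXa : MemLp (fun ω => |X ω|) 2 ℙ := by
    simpa [Real.norm_eq_abs] using hX.norm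
  have hXai : Integrable (fun ω => |X ω|) ℙ := hXi.abs
  set μ := ∫ ω, X ω with hμ
  set A := ∫ ω, |X ω| with hA
  have hvdef : variance X ℙ = (∫ ω, X ω ^ 2) - μ ^ 2 := by
    rw [variance_eq_sub hX]; rfl
  have hvadef : variance (fun ω => |X ω|) ℙ = (∫ ω, X ω ^ 2) - A ^ 2 := by
    rw [variance_eq_sub hXa]
    simp [sq_abs, hA]
  have hvan : 0 ≤ variance (fun ω => |X ω|) ℙ := variance_nonneg _ _
  have hAsq : A ^ 2 ≤ (∫ ω, X ω ^ 2) := by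
    rw [hvadef] at hvan; linarith
  have hA0 : 0 ≤ A := integral_nonneg fun ω => abs_nonneg _
  have hAle : A ≤ Real.sqrt (V + μ ^ 2) := by
    have h1 : A ^ 2 ≤ V + μ ^ 2 := by
      have := hvdef ▸ hvar; linarith
    calc A = Real.sqrt (A ^ 2) := (Real.sqrt_sq hA0).symm
    _ ≤ Real.sqrt (V + μ ^ 2) := Real.sqrt_le_sqrt h1
  have hmax : (∫ ω, max (X ω) 0) = (μ + A) / 2 := by
    have heq : ∀ ω, max (X ω) 0 = (X ω + |X ω|) / 2 := by
      intro ω; rcases le_total (X ω) 0 with h | h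
      · rw [max_eq_right h, abs_of_nonpos h]; ring
      · rw [max_eq_left h, abs_of_nonneg h]; ring
    simp_rw [heq]
    rw [integral_div, integral_add hXi hXai]
  set s := Real.sqrt (V + μ ^ 2) with hsdef
  set r := Real.sqrt (V + m ^ 2) with hrdef
  have hs : s ^ 2 = V + μ ^ 2 := Real.sq_sqrt (by positivity)
  have hr : r ^ 2 = V + m ^ 2 := Real.sq_sqrt (by positivity)
  have hs0 : 0 ≤ s := Real.sqrt_nonneg _
  have hr0 : 0 ≤ r := Real.sqrt_nonneg _
  have hrpos : 0 < r := by nlinarith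
  have hsμ : 0 ≤ s + μ := by nlinarith [sq_nonneg (s + μ), sq_nonneg (s - μ)]
  have hsr : r ≤ s := by nlinarith
  rw [hmax, div_le_div_iff₀ (by norm_num) (by positivity)]
  nlinarith [mul_nonneg hsμ (by linarith : (0:ℝ) ≤ s - μ - r - m),
    mul_le_mul_of_nonneg_right hAle (by positivity : (0:ℝ) ≤ 2 * (r + m))]
end

section
/- Let X be a real-valued random variable on a probability space with |X| ≤ B almost surely for some B ≥ 0. Then E[[X]_+²] ≤ B · E[[X]_+]. Consequently, if in addition E[X] ≤ -m for some m ≥ 0 and Var(X) ≤ V for some V > 0, then E[[X]_+²] ≤ B·V / (2(√(V + m²) + m)). -/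
open MeasureTheory ProbabilityTheory

/-- If `|X| ≤ B` a.s., then `E[[X]₊²] ≤ B · E[[X]₊]`; consequently, if in addition
`E[X] ≤ -m` with `m ≥ 0` and `Var X ≤ V` with `V > 0`, then
`E[[X]₊²] ≤ B·V / (2(√(V + m²) + m))`. -/
theorem sq_hinge_expectation_bound {Ω : Type*} [MeasureSpace Ω]
    [IsProbabilityMeasure (ℙ : Measure Ω)]
    (X : Ω → ℝ) (hXmeas : AEStronglyMeasurable X ℙ) (B : ℝ) (hB : 0 ≤ B)
    (hbd : ∀ᵐ ω ∂ℙ, |X ω| ≤ B) :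
    (∫ ω, (max (X ω) 0) ^ 2) ≤ B * ∫ ω, max (X ω) 0 ∧
      ∀ m V : ℝ, 0 ≤ m → 0 < V → (∫ ω, X ω) ≤ -m → variance X ℙ ≤ V →
        (∫ ω, (max (X ω) 0) ^ 2) ≤ B * V / (2 * (Real.sqrt (V + m ^ 2) + m)) := by
  have hX2 : MemLp X 2 ℙ := MemLp.of_bound hXmeas B (by filter_upwards [hbd] with ω h using h)
  have hXint : Integrable X ℙ := hX2.integrable (by norm_num)
  have hmax_meas : AEStronglyMeasurable (fun ω => max (X ω) 0) ℙ :=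
    hXmeas.sup aestronglyMeasurable_const
  have hmaxint : Integrable (fun ω => max (X ω) 0) ℙ := by
    refine (integrable_const B).mono' hmax_meas ?_
    filter_upwards [hbd] with ω h
    rw [Real.norm_eq_abs]
    rcases le_or_gt (X ω) 0 with h0 | h0
    · simp [max_eq_right h0, hB]
    · rw [max_eq_left h0.le, abs_of_pos h0]; exact (le_abs_self _).trans h
  have hmaxbd : ∀ᵐ ω ∂ℙ, |max (X ω) 0| ≤ B := by
    filter_upwards [hbd] with ω h
    rcases le_or_gt (X ω) 0 with h0 | h0
    · simp [max_eq_right h0, hB]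
    · rw [max_eq_left h0.le, abs_of_pos h0]; exact (le_abs_self _).trans h
  have hsqint : Integrable (fun ω => (max (X ω) 0) ^ 2) ℙ := by
    refine (integrable_const (B ^ 2)).mono' (hmax_meas.pow 2) ?_
    filter_upwards [hmaxbd] with ω h
    rw [Real.norm_eq_abs, abs_pow, sq_abs]
    have : |max (X ω) 0| ^ 2 ≤ B ^ 2 := by
      apply pow_le_pow_left₀ (abs_nonneg _) h
    simpa [sq_abs] using this
  have part1 : (∫ ω, (max (X ω) 0) ^ 2) ≤ B * ∫ ω, max (X ω) 0 := by
    rw [← integral_const_mul]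
    refine integral_mono_ae hsqint (hmaxint.const_mul B) ?_
    filter_upwards [hmaxbd] with ω h
    have h0 : 0 ≤ max (X ω) 0 := le_max_right _ _
    have : max (X ω) 0 ≤ B := by rwa [abs_of_nonneg h0] at h
    nlinarith
  refine ⟨part1, fun m V hm hV hmean hvar => ?_⟩
  set μ₀ := ∫ ω, X ω with hμ₀
  set s := Real.sqrt (V + m ^ 2) with hs
  have hs2 : s ^ 2 = V + m ^ 2 := Real.sq_sqrt (by positivity)
  have hsnn : 0 ≤ s := Real.sqrt_nonneg _
  have hms : m ≤ s := by
    nlinarith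
  have hspos : 0 < s + m := by nlinarith
  -- E|X|
  have habsint : Integrable (fun ω => |X ω|) ℙ := hXint.abs
  have habs2 : MemLp (fun ω => |X ω|) 2 ℙ := by simpa [Real.norm_eq_abs] using hX2.norm
  have hvd := variance_eq_sub habs2
  have hvn := variance_nonneg (fun ω => |X ω|) ℙ
  have hvd' := variance_eq_sub hX2
  have hX2int : Integrable (fun ω => X ω ^ 2) ℙ := hX2.integrable_sq
  have hI2 : ∫ ω, |X ω| ^ 2 ∂ℙ = ∫ ω, X ω ^ 2 ∂ℙ := by
    congr 1; funext ω; rw [sq_abs]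
  have hCS : (∫ ω, |X ω|) ^ 2 ≤ ∫ ω, X ω ^ 2 := by
    have : (∫ ω, |X ω| ∂ℙ) ^ 2 ≤ ∫ ω, (fun ω => |X ω|) ω ^ 2 ∂ℙ := by
      have hvd2 := hvd; simp only [Pi.pow_apply] at hvd2
      nlinarith [hvd2, hvn]
    simpa [hI2] using this
  have hvar' : ∫ ω, X ω ^ 2 ≤ V + μ₀ ^ 2 := by
    have hvd2 := hvd'; simp only [Pi.pow_apply] at hvd2
    nlinarith [hvd2]
  have hI1nn : 0 ≤ ∫ ω, |X ω| := integral_nonneg fun ω => abs_nonneg _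
  set I1 := ∫ ω, |X ω| with hI1
  have hI1le : I1 ^ 2 ≤ V + μ₀ ^ 2 := le_trans hCS hvar'
  -- key: I1 + μ₀ ≤ s - m
  have hkey : I1 + μ₀ ≤ s - m := by
    have hsq : I1 ≤ Real.sqrt (V + μ₀ ^ 2) := Real.le_sqrt_of_sq_le hI1le
    set t := Real.sqrt (V + μ₀ ^ 2) with ht
    have ht2 : t ^ 2 = V + μ₀ ^ 2 := Real.sq_sqrt (by positivity)
    have htnn : 0 ≤ t := Real.sqrt_nonneg _
    have hmm : 0 ≤ -m - μ₀ := by linarith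
    have : t ≤ s + (-m - μ₀) := by nlinarith [mul_le_mul_of_nonneg_right hms hmm]
    linarith
  -- integral of max
  have hmaxeq : ∫ ω, max (X ω) 0 = (I1 + μ₀) / 2 := by
    have : ∀ ω, max (X ω) 0 = (|X ω| + X ω) / 2 := by
      intro ω; rcases le_or_gt (X ω) 0 with h0 | h0
      · rw [max_eq_right h0, abs_of_nonpos h0]; ring
      · rw [max_eq_left h0.le, abs_of_pos h0]; ring
    simp_rw [this]
    rw [integral_div, integral_add habsint hXint]
  have hfinal : ∫ ω, max (X ω) 0 ≤ V / (2 * (s + m)) := by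
    rw [hmaxeq]
    have hid : (s - m) / 2 = V / (2 * (s + m)) := by
      rw [div_eq_div_iff (by norm_num) (by positivity)]
      nlinarith
    rw [← hid]
    linarith
  calc (∫ ω, (max (X ω) 0) ^ 2) ≤ B * ∫ ω, max (X ω) 0 := part1
    _ ≤ B * (V / (2 * (s + m))) := by
        apply mul_le_mul_of_nonneg_left hfinal hB
    _ = B * V / (2 * (s + m)) := by ring
end

section
/- Let L ≥ 1 be a natural number, γ a real number, and let (q_j)_{0 ≤ j ≤ L}, (q*_j)_{0 ≤ j ≤ L}, (r_j)_{0 ≤ j ≤ L-1} be real sequences. Define ε_j := r_j + γ·q*_{j+1} - q_j for 0 ≤ j ≤ L-1, Δ_j := q*_j - q_j for 0 ≤ j ≤ L, and G := Σ_{k=0}^{L-1} γ^k r_k. Then G + γ^L q_L - q*_0 = Σ_{k=0}^{L-1} γ^k ε_k - Σ_{k=0}^{L} γ^k Δ_k. -/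
lemma ub_telescoping_aux (L : ℕ) (γ : ℝ) (q qs r : ℕ → ℝ) :
    (∑ k ∈ Finset.range L, γ ^ k * r k) + γ ^ L * q L - qs 0 =
      (∑ k ∈ Finset.range L, γ ^ k * (r k + γ * qs (k + 1) - q k)) -
        ∑ k ∈ Finset.range (L + 1), γ ^ k * (qs k - q k) := by
  induction L with
  | zero => simp
  | succ n ih =>
    simp only [Finset.sum_range_succ, pow_succ] at *
    linarith

/-- Telescoping decomposition of the upper-bound (UB) hinge violation signal:
with `ε j = r j + γ q*_{j+1} - q j`, `Δ j = q*_j - q j`, `G = Σ_{k<L} γ^k r k`,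
we have `G + γ^L q_L - q*_0 = Σ_{k<L} γ^k ε_k - Σ_{k≤L} γ^k Δ_k`. -/
theorem ub_telescoping (L : ℕ) (hL : 1 ≤ L) (γ : ℝ) (q qs r : ℕ → ℝ) :
    let ε : ℕ → ℝ := fun j => r j + γ * qs (j + 1) - q j
    let Δ : ℕ → ℝ := fun j => qs j - q j
    let G : ℝ := ∑ k ∈ Finset.range L, γ ^ k * r k
    G + γ ^ L * q L - qs 0 =
      (∑ k ∈ Finset.range L, γ ^ k * ε k) -
        ∑ k ∈ Finset.range (L + 1), γ ^ k * Δ k := by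
  exact ub_telescoping_aux L γ q qs r
end

section
/- Let L ≥ 2 be a natural number, γ ∈ [0, 1), M > 0, d ≥ 0, and let W_0, …, W_{L-1} be real-valued random variables on a probability space with |W_j| ≤ M almost surely for every j, E[W_0] = 0, E[W_j] ≤ 0 for every 1 ≤ j ≤ L-1, and E[W_1] ≤ -d. Define Z := Σ_{j=0}^{L-1} γ^j W_j and V := M²/(1-γ)². Then P(Z > 0) ≤ V / (V + γ²d²). -/
open MeasureTheory ProbabilityTheory

/-- Probability of a false LB hinge penalty: with `|W_j| ≤ M` a.s., `E[W_0] = 0`,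
`E[W_j] ≤ 0` for `1 ≤ j ≤ L-1`, `E[W_1] ≤ -d`, and `Z = Σ_{j<L} γ^j W_j`,
`V = M²/(1-γ)²`, we have `P(Z > 0) ≤ V / (V + γ²d²)`. -/
theorem lb_false_penalty_prob {Ω : Type*} [MeasureSpace Ω]
    [IsProbabilityMeasure (ℙ : Measure Ω)]
    (L : ℕ) (hL : 2 ≤ L) (γ M d : ℝ) (hγ0 : 0 ≤ γ) (hγ1 : γ < 1) (hM : 0 < M) (hd : 0 ≤ d)
    (W : ℕ → Ω → ℝ) (hmeas : ∀ j, Measurable (W j))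
    (hbd : ∀ j, ∀ᵐ ω ∂ℙ, |W j ω| ≤ M)
    (hW0 : (∫ ω, W 0 ω) = 0)
    (hWj : ∀ j, 1 ≤ j → j ≤ L - 1 → (∫ ω, W j ω) ≤ 0)
    (hW1 : (∫ ω, W 1 ω) ≤ -d) :
    (ℙ {ω | 0 < ∑ j ∈ Finset.range L, γ ^ j * W j ω}).toReal ≤
      (M ^ 2 / (1 - γ) ^ 2) / (M ^ 2 / (1 - γ) ^ 2 + γ ^ 2 * d ^ 2) := by
  have hγ' : 0 < 1 - γ := by linarith
  set V : ℝ := M ^ 2 / (1 - γ) ^ 2 with hVdef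
  have hVpos : 0 < V := by positivity
  set a : ℝ := γ * d with hadef
  have ha2 : γ ^ 2 * d ^ 2 = a ^ 2 := by ring
  rw [ha2]
  have ha0 : 0 ≤ a := mul_nonneg hγ0 hd
  -- trivial case a = 0
  rcases eq_or_lt_of_le ha0 with ha | ha
  · have : V / (V + a ^ 2) = 1 := by rw [← ha]; field_simp; ring
    rw [this]
    exact ENNReal.toReal_le_of_le_ofReal zero_le_one (by simpa using prob_le_one)
  -- main case
  set Z : Ω → ℝ := fun ω => ∑ j ∈ Finset.range L, γ ^ j * W j ω with hZdef
  have hZmeas : Measurable Z := by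
    apply Finset.measurable_sum
    intro j _
    exact (hmeas j).const_mul _
  -- each W j integrable
  have hWint : ∀ j, Integrable (W j) ℙ := by
    intro j
    exact (integrable_const M).mono' (hmeas j).aestronglyMeasurable
      ((hbd j).mono fun ω h => by simpa using h)
  -- a.s. bound on Z
  have hgeo : (∑ j ∈ Finset.range L, γ ^ j) ≤ 1 / (1 - γ) := by
    rw [geom_sum_eq (ne_of_lt hγ1) L]
    have h : (γ ^ L - 1) / (γ - 1) = (1 - γ ^ L) / (1 - γ) := by
      rw [div_eq_div_iff (by linarith) (by linarith)]; ring
    rw [h]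
    exact div_le_div₀ zero_le_one (by nlinarith [pow_nonneg hγ0 L]) hγ' le_rfl
  have hZbd : ∀ᵐ ω ∂ℙ, |Z ω| ≤ M / (1 - γ) := by
    have hall : ∀ᵐ ω ∂ℙ, ∀ j ∈ Finset.range L, |W j ω| ≤ M :=
      (ae_ball_iff (Finset.range L).countable_toSet).2 fun j _ => hbd j
    filter_upwards [hall] with ω hω
    calc |Z ω| ≤ ∑ j ∈ Finset.range L, |γ ^ j * W j ω| := Finset.abs_sum_le_sum_abs _ _
      _ ≤ ∑ j ∈ Finset.range L, γ ^ j * M := by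
          apply Finset.sum_le_sum
          intro j hj
          rw [abs_mul, abs_pow, abs_of_nonneg hγ0]
          exact mul_le_mul_of_nonneg_left (hω j hj) (pow_nonneg hγ0 j)
      _ = (∑ j ∈ Finset.range L, γ ^ j) * M := by rw [Finset.sum_mul]
      _ ≤ (1 / (1 - γ)) * M := mul_le_mul_of_nonneg_right hgeo hM.le
      _ = M / (1 - γ) := by ring
  have hZint : Integrable Z ℙ :=
    (integrable_const (M / (1 - γ))).mono' hZmeas.aestronglyMeasurable
      (hZbd.mono fun ω h => by simpa using h)
  -- mean of Z
  set μZ : ℝ := ∫ ω, Z ω with hμdef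
  have hμeq : μZ = ∑ j ∈ Finset.range L, γ ^ j * ∫ ω, W j ω := by
    rw [hμdef, hZdef]
    rw [integral_finset_sum _ (fun j _ => (hWint j).const_mul _)]
    exact Finset.sum_congr rfl fun j _ => integral_const_mul _ _
  have hμle : μZ ≤ -a := by
    rw [hμeq]
    have hsplit : Finset.range L = Finset.range 2 ∪ Finset.Ico 2 L := by
      rw [Finset.range_eq_Ico]
      exact (Finset.Ico_union_Ico_eq_Ico (Nat.zero_le 2) hL).symm
    rw [hsplit, Finset.sum_union (by
      rw [Finset.range_eq_Ico]
      exact Finset.Ico_disjoint_Ico_consecutive 0 2 L)]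
    have h1 : ∑ j ∈ Finset.range 2, γ ^ j * ∫ ω, W j ω ≤ -a := by
      rw [Finset.sum_range_succ, Finset.sum_range_one, hW0]
      have := mul_le_mul_of_nonneg_left hW1 hγ0
      simp only [pow_zero, pow_one, mul_zero, zero_add]
      nlinarith
    have h2 : ∑ j ∈ Finset.Ico 2 L, γ ^ j * ∫ ω, W j ω ≤ 0 := by
      apply Finset.sum_nonpos
      intro j hj
      rw [Finset.mem_Ico] at hj
      have hj1 : 1 ≤ j := le_trans (by norm_num) hj.1
      have hjL : j ≤ L - 1 := Nat.le_sub_one_of_lt hj.2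
      exact mul_nonpos_of_nonneg_of_nonpos (pow_nonneg hγ0 j) (hWj j hj1 hjL)
    linarith
  -- second moment bound
  have hZ2int : Integrable (fun ω => (Z ω) ^ 2) ℙ :=
    (integrable_const ((M / (1 - γ)) ^ 2)).mono' (hZmeas.pow_const 2).aestronglyMeasurable
      (hZbd.mono fun ω h => by
        rw [Real.norm_eq_abs, abs_pow]
        exact pow_le_pow_left₀ (abs_nonneg _) h 2)
  have hZ2le : (∫ ω, (Z ω) ^ 2) ≤ V := by
    have h1 : (∫ ω, (Z ω) ^ 2) ≤ ∫ _ω, (M / (1 - γ)) ^ 2 ∂(ℙ : Measure Ω) := by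
      apply integral_mono_ae hZ2int (integrable_const _)
      filter_upwards [hZbd] with ω h
      calc Z ω ^ 2 = |Z ω| ^ 2 := (sq_abs _).symm
        _ ≤ (M / (1 - γ)) ^ 2 := pow_le_pow_left₀ (abs_nonneg _) h 2
    rw [integral_const] at h1
    simp only [probReal_univ, ENNReal.toReal_one, smul_eq_mul, one_mul] at h1
    calc (∫ ω, (Z ω) ^ 2) ≤ (M / (1 - γ)) ^ 2 := h1
      _ = V := by rw [hVdef, div_pow]
  -- Markov on (Z - μZ + u)^2
  set u : ℝ := V / a with hudef
  have hu : 0 < u := div_pos hVpos ha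
  set f : Ω → ℝ := fun ω => (Z ω - μZ + u) ^ 2 with hfdef
  have hfint : Integrable f ℙ := by
    have : f = fun ω => (Z ω) ^ 2 + (2 * (u - μZ)) * Z ω + (u - μZ) ^ 2 := by
      funext ω; rw [hfdef]; ring
    rw [this]
    exact ((hZ2int.add (hZint.const_mul _)).add (integrable_const _))
  have hfeq : (∫ ω, f ω) = (∫ ω, (Z ω) ^ 2) - μZ ^ 2 + u ^ 2 := by
    have h0 : (∫ ω, f ω)
        = ∫ ω, ((Z ω) ^ 2 + (2 * (u - μZ)) * Z ω + (u - μZ) ^ 2) ∂(ℙ : Measure Ω) := by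
      apply integral_congr_ae
      filter_upwards with ω
      show f ω = _
      rw [hfdef]; ring
    have hA : Integrable (fun ω => Z ω ^ 2 + 2 * (u - μZ) * Z ω) ℙ :=
      hZ2int.add (hZint.const_mul _)
    have hB : Integrable (fun ω => 2 * (u - μZ) * Z ω) ℙ := hZint.const_mul _
    rw [h0, integral_add hA (integrable_const _), integral_add hZ2int hB,
      integral_const_mul, integral_const]
    simp only [probReal_univ, ENNReal.toReal_one, smul_eq_mul, one_mul]
    rw [← hμdef]; ring
  have hfle : (∫ ω, f ω) ≤ V + u ^ 2 := by
    rw [hfeq]; nlinarith [sq_nonneg μZ]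
  -- event inclusion
  have hsub : {ω | 0 < Z ω} ⊆ {ω | (a + u) ^ 2 ≤ f ω} := by
    intro ω hω
    simp only [Set.mem_setOf_eq] at hω ⊢
    have hfω : f ω = (Z ω - μZ + u) ^ 2 := rfl
    rw [hfω]
    have h1 : a + u ≤ Z ω - μZ + u := by
      have : a ≤ -μZ := by linarith
      linarith
    have h2 : 0 ≤ a + u := by positivity
    exact pow_le_pow_left₀ h2 h1 2
  have hmarkov := mul_meas_ge_le_integral_of_nonneg
    (μ := (ℙ : Measure Ω)) (f := f) (ae_of_all _ fun ω => sq_nonneg _) hfint ((a + u) ^ 2)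
  have hmono : (ℙ {ω | 0 < Z ω}).toReal ≤ (ℙ {ω | (a + u) ^ 2 ≤ f ω}).toReal := by
    apply ENNReal.toReal_mono (measure_ne_top _ _)
    exact measure_mono hsub
  have hau : 0 < (a + u) ^ 2 := by positivity
  have hkey : (ℙ {ω | 0 < Z ω}).toReal ≤ (V + u ^ 2) / (a + u) ^ 2 := by
    rw [le_div_iff₀ hau]
    calc (ℙ {ω | 0 < Z ω}).toReal * (a + u) ^ 2
        ≤ (ℙ {ω | (a + u) ^ 2 ≤ f ω}).toReal * (a + u) ^ 2 :=
          mul_le_mul_of_nonneg_right hmono hau.le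
      _ = (a + u) ^ 2 * (ℙ {ω | (a + u) ^ 2 ≤ f ω}).toReal := mul_comm _ _
      _ ≤ ∫ ω, f ω := hmarkov
      _ ≤ V + u ^ 2 := hfle
  have hfinal : (V + u ^ 2) / (a + u) ^ 2 = V / (V + a ^ 2) := by
    rw [hudef]
    field_simp
    ring
  calc (ℙ {ω | 0 < Z ω}).toReal ≤ (V + u ^ 2) / (a + u) ^ 2 := hkey
    _ = V / (V + a ^ 2) := hfinal
end

section
/- Let L ≥ 2 be a natural number, γ ∈ [0, 1), M > 0, d ≥ 0, and let W_0, …, W_{L-1} be real-valued random variables on a probability space with |W_j| ≤ M almost surely for every j, E[W_0] = 0, E[W_j] ≤ 0 for every 1 ≤ j ≤ L-1, and E[W_1] ≤ -d. Define Z := Σ_{j=0}^{L-1} γ^j W_j and V := M²/(1-γ)². Then E[[Z]_+] ≤ V / (2(√(V + γ²d²) + γd)). -/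
open MeasureTheory ProbabilityTheory

/-- Expected false LB hinge penalty: with `|W_j| ≤ M` a.s., `E[W_0] = 0`,
`E[W_j] ≤ 0` for `1 ≤ j ≤ L-1`, `E[W_1] ≤ -d`, `Z = Σ_{j<L} γ^j W_j`, and
`V = M²/(1-γ)²`, we have `E[[Z]₊] ≤ V / (2(√(V + γ²d²) + γd))`. -/
theorem lb_false_penalty_expectation {Ω : Type*} [MeasureSpace Ω]
    [IsProbabilityMeasure (ℙ : Measure Ω)]
    (L : ℕ) (hL : 2 ≤ L) (γ M d : ℝ) (hγ0 : 0 ≤ γ) (hγ1 : γ < 1) (hM : 0 < M) (hd : 0 ≤ d)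
    (W : ℕ → Ω → ℝ) (hmeas : ∀ j, Measurable (W j))
    (hbd : ∀ j, ∀ᵐ ω ∂ℙ, |W j ω| ≤ M)
    (hW0 : (∫ ω, W 0 ω) = 0)
    (hWj : ∀ j, 1 ≤ j → j ≤ L - 1 → (∫ ω, W j ω) ≤ 0)
    (hW1 : (∫ ω, W 1 ω) ≤ -d) :
    (∫ ω, max (∑ j ∈ Finset.range L, γ ^ j * W j ω) 0) ≤
      (M ^ 2 / (1 - γ) ^ 2) /
        (2 * (Real.sqrt (M ^ 2 / (1 - γ) ^ 2 + γ ^ 2 * d ^ 2) + γ * d)) := by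
  have h1γ : 0 < 1 - γ := by linarith
  set B : ℝ := M / (1 - γ) with hB
  have hBpos : 0 < B := div_pos hM h1γ
  set V : ℝ := M ^ 2 / (1 - γ) ^ 2 with hV
  have hVB : V = B ^ 2 := by rw [hV, hB, div_pow]
  have hVpos : 0 < V := by rw [hVB]; positivity
  set a : ℝ := γ * d with ha
  have ha0 : 0 ≤ a := mul_nonneg hγ0 hd
  set t : ℝ := Real.sqrt (V + a ^ 2) with ht
  have htsq : t ^ 2 = V + a ^ 2 := Real.sq_sqrt (by positivity)
  have htpos : 0 < t := Real.sqrt_pos.mpr (by positivity)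
  set Z : Ω → ℝ := fun ω => ∑ j ∈ Finset.range L, γ ^ j * W j ω with hZ
  have hWint : ∀ j, Integrable (W j) := fun j =>
    (integrable_const M).mono' (hmeas j).aestronglyMeasurable (by
      filter_upwards [hbd j] with ω h using by simpa using h)
  have hZmeas : Measurable Z := by
    apply Finset.measurable_sum
    exact fun j _ => (hmeas j).const_mul _
  -- geometric sum bound
  have hgeom : (∑ j ∈ Finset.range L, γ ^ j) ≤ 1 / (1 - γ) := by
    have hsum := Summable.sum_le_tsum (Finset.range L) (fun i _ => pow_nonneg hγ0 i)
      (summable_geometric_of_lt_one hγ0 hγ1)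
    rw [tsum_geometric_of_lt_one hγ0 hγ1] at hsum
    simpa [one_div] using hsum
  have hZbd : ∀ᵐ ω ∂ℙ, |Z ω| ≤ B := by
    filter_upwards [ae_all_iff.2 hbd] with ω h
    calc |Z ω| ≤ ∑ j ∈ Finset.range L, |γ ^ j * W j ω| :=
          Finset.abs_sum_le_sum_abs _ _
      _ ≤ ∑ j ∈ Finset.range L, γ ^ j * M := by
          refine Finset.sum_le_sum fun j _ => ?_
          rw [abs_mul, abs_pow, abs_of_nonneg hγ0]
          exact mul_le_mul_of_nonneg_left (h j) (pow_nonneg hγ0 j)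
      _ = (∑ j ∈ Finset.range L, γ ^ j) * M := by rw [Finset.sum_mul]
      _ ≤ (1 / (1 - γ)) * M := by
          exact mul_le_mul_of_nonneg_right hgeom hM.le
      _ = B := by rw [hB]; ring
  have hZint : Integrable Z :=
    (integrable_const B).mono' hZmeas.aestronglyMeasurable (by
      filter_upwards [hZbd] with ω h using by simpa using h)
  have hZsqint : Integrable (fun ω => Z ω ^ 2) :=
    (integrable_const (B ^ 2)).mono' ((hZmeas.pow_const 2).aestronglyMeasurable) (by
      filter_upwards [hZbd] with ω h
      have : |Z ω ^ 2| = |Z ω| ^ 2 := by rw [abs_pow]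
      simp only [Real.norm_eq_abs, this]
      exact pow_le_pow_left₀ (abs_nonneg _) h 2)
  -- mean bound
  have hEZ : (∫ ω, Z ω) ≤ -a := by
    have hrw : (∫ ω, Z ω) = ∑ j ∈ Finset.range L, γ ^ j * (∫ ω, W j ω) := by
      rw [hZ, integral_finset_sum _ fun j _ => (hWint j).const_mul _]
      simp [integral_const_mul]
    rw [hrw]
    calc (∑ j ∈ Finset.range L, γ ^ j * (∫ ω, W j ω))
        ≤ ∑ j ∈ Finset.range L, (if j = 1 then -a else 0) := by
          refine Finset.sum_le_sum fun j hj => ?_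
          rcases eq_or_ne j 1 with rfl | hne
          · simp only [if_pos rfl, pow_one]
            calc γ * ∫ ω, W 1 ω ≤ γ * (-d) := mul_le_mul_of_nonneg_left hW1 hγ0
              _ = -a := by rw [ha]; ring
          · simp only [if_neg hne]
            rcases Nat.eq_zero_or_pos j with rfl | hj1
            · simp [hW0]
            · have hE := hWj j hj1 (by have := Finset.mem_range.1 hj; omega)
              have hp : 0 ≤ γ ^ j := pow_nonneg hγ0 j
              exact mul_nonpos_of_nonneg_of_nonpos hp hE
      _ = -a := by
          rw [Finset.sum_ite_eq' (Finset.range L) 1 (fun _ => -a),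
            if_pos (Finset.mem_range.mpr (by omega))]
  -- second moment bound
  have hEZsq : (∫ ω, Z ω ^ 2) ≤ V := by
    have : (∫ ω, Z ω ^ 2) ≤ ∫ (_ : Ω), (B ^ 2 : ℝ) := by
      refine integral_mono_ae hZsqint (integrable_const _) ?_
      filter_upwards [hZbd] with ω h
      calc Z ω ^ 2 = |Z ω| ^ 2 := (sq_abs _).symm
        _ ≤ B ^ 2 := pow_le_pow_left₀ (abs_nonneg _) h 2
    simpa [hVB] using this
  -- hinge pointwise bound
  have hmaxint : Integrable (fun ω => max (Z ω) 0) :=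
    (integrable_const B).mono' (hZmeas.max measurable_const).aestronglyMeasurable (by
      filter_upwards [hZbd] with ω h
      simp only [Real.norm_eq_abs]
      rcases le_total (Z ω) 0 with h0 | h0
      · rw [max_eq_right h0]; simpa using hBpos.le
      · rw [max_eq_left h0]; rwa [abs_of_nonneg h0] at h ⊢)
  have hquadint : Integrable (fun ω => (Z ω + t) ^ 2) := by
    have : (fun ω => (Z ω + t) ^ 2) = fun ω => Z ω ^ 2 + 2 * t * Z ω + t ^ 2 := by
      funext ω; ring
    rw [this]
    exact (hZsqint.add (hZint.const_mul (2 * t))).add (integrable_const _)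
  have hhinge : (∫ ω, max (Z ω) 0) ≤ (∫ ω, (Z ω + t) ^ 2) / (4 * t) := by
    have hpt : ∀ ω, max (Z ω) 0 ≤ (Z ω + t) ^ 2 / (4 * t) := by
      intro ω
      rcases le_total (Z ω) 0 with h0 | h0
      · rw [max_eq_right h0]; positivity
      · rw [max_eq_left h0, le_div_iff₀ (by positivity)]
        nlinarith [sq_nonneg (Z ω - t)]
    calc (∫ ω, max (Z ω) 0) ≤ ∫ ω, (Z ω + t) ^ 2 / (4 * t) := by
          exact integral_mono hmaxint (hquadint.div_const _) hpt
      _ = (∫ ω, (Z ω + t) ^ 2) / (4 * t) := integral_div _ _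
  have hquadval : (∫ ω, (Z ω + t) ^ 2) ≤ V - 2 * t * a + t ^ 2 := by
    have h1 : Integrable (fun ω => Z ω ^ 2 + 2 * t * Z ω) :=
      hZsqint.add (hZint.const_mul (2 * t))
    have key : (∫ ω, (Z ω + t) ^ 2) =
        (∫ ω, Z ω ^ 2) + 2 * t * (∫ ω, Z ω) + t ^ 2 := by
      calc (∫ ω, (Z ω + t) ^ 2) = ∫ ω, (Z ω ^ 2 + 2 * t * Z ω) + t ^ 2 := by
            congr 1; funext ω; ring
        _ = (∫ ω, Z ω ^ 2 + 2 * t * Z ω) + ∫ (_ : Ω), t ^ 2 :=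
            integral_add h1 (integrable_const _)
        _ = ((∫ ω, Z ω ^ 2) + ∫ ω, 2 * t * Z ω) + t ^ 2 := by
            rw [integral_add hZsqint (hZint.const_mul (2 * t)), integral_const]
            simp
        _ = (∫ ω, Z ω ^ 2) + 2 * t * (∫ ω, Z ω) + t ^ 2 := by
            rw [integral_const_mul]
    rw [key]
    nlinarith [hEZ, hEZsq, htpos.le]
  -- final algebra
  have hfinal : (V - 2 * t * a + t ^ 2) / (4 * t) ≤ V / (2 * (t + a)) := by
    rw [div_le_div_iff₀ (by positivity) (by positivity)]
    nlinarith [htsq, ha0, htpos.le, mul_nonneg (mul_nonneg ha0 ha0) htpos.le,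
      mul_nonneg (mul_nonneg ha0 ha0) ha0]
  have hgd : γ ^ 2 * d ^ 2 = a ^ 2 := by rw [ha]; ring
  calc (∫ ω, max (Z ω) 0) ≤ (∫ ω, (Z ω + t) ^ 2) / (4 * t) := hhinge
    _ ≤ (V - 2 * t * a + t ^ 2) / (4 * t) := by gcongr
    _ ≤ V / (2 * (t + a)) := hfinal
    _ = V / (2 * (Real.sqrt (V + γ ^ 2 * d ^ 2) + a)) := by rw [hgd, ← ht]
end

section
/- Let L ≥ 2 be a natural number, γ ∈ [0, 1), M > 0, d ≥ 0, and let W_0, …, W_{L-1} be real-valued random variables on a probability space with |W_j| ≤ M almost surely for every j, E[W_0] = 0, E[W_j] ≤ 0 for every 1 ≤ j ≤ L-1, and E[W_1] ≤ -d. Define Z := Σ_{j=0}^{L-1} γ^j W_j and V := M²/(1-γ)². Then E[[Z]_+²] ≤ V^{3/2} / (2(√(V + γ²d²) + γd)). -/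
open MeasureTheory ProbabilityTheory

/-- Expected squared false LB hinge penalty: with `|W_j| ≤ M` a.s., `E[W_0] = 0`,
`E[W_j] ≤ 0` for `1 ≤ j ≤ L-1`, `E[W_1] ≤ -d`, `Z = Σ_{j<L} γ^j W_j`, and
`V = M²/(1-γ)²`, we have `E[[Z]₊²] ≤ V^{3/2} / (2(√(V + γ²d²) + γd))`. -/
theorem lb_false_penalty_sq_expectation {Ω : Type*} [MeasureSpace Ω]
    [IsProbabilityMeasure (ℙ : Measure Ω)]
    (L : ℕ) (hL : 2 ≤ L) (γ M d : ℝ) (hγ0 : 0 ≤ γ) (hγ1 : γ < 1) (hM : 0 < M) (hd : 0 ≤ d)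
    (W : ℕ → Ω → ℝ) (hmeas : ∀ j, Measurable (W j))
    (hbd : ∀ j, ∀ᵐ ω ∂ℙ, |W j ω| ≤ M)
    (hW0 : (∫ ω, W 0 ω) = 0)
    (hWj : ∀ j, 1 ≤ j → j ≤ L - 1 → (∫ ω, W j ω) ≤ 0)
    (hW1 : (∫ ω, W 1 ω) ≤ -d) :
    (∫ ω, (max (∑ j ∈ Finset.range L, γ ^ j * W j ω) 0) ^ 2) ≤
      (M ^ 2 / (1 - γ) ^ 2) ^ ((3 : ℝ) / 2) /
        (2 * (Real.sqrt (M ^ 2 / (1 - γ) ^ 2 + γ ^ 2 * d ^ 2) + γ * d)) := by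
  have h1γ : 0 < 1 - γ := by linarith
  set c : ℝ := M / (1 - γ) with hc
  have hc0 : 0 < c := div_pos hM h1γ
  set Z : Ω → ℝ := fun ω => ∑ j ∈ Finset.range L, γ ^ j * W j ω with hZ
  have hZmeas : Measurable Z := by
    apply Finset.measurable_sum
    intro j _; exact (hmeas j).const_mul _
  have hWint : ∀ j, Integrable (W j) := fun j =>
    (integrable_const M).mono' (hmeas j).aestronglyMeasurable
      (by filter_upwards [hbd j] with ω h; simpa using h)
  have hZint : Integrable Z := by
    apply integrable_finset_sum
    intro j _; exact ((hWint j).const_mul _)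
  -- geometric sum bound
  have hgeo : ∑ j ∈ Finset.range L, γ ^ j ≤ 1 / (1 - γ) := by
    have heq : ∑ j ∈ Finset.range L, γ ^ j = (1 - γ ^ L) / (1 - γ) := by
      rw [geom_sum_eq (by linarith : γ ≠ 1)]
      rw [← neg_div_neg_eq]; ring_nf
    rw [heq]
    gcongr
    · have : (0:ℝ) ≤ γ ^ L := pow_nonneg hγ0 L
      linarith
  -- a.e. bound on |Z|
  have hbd' : ∀ᵐ ω ∂ℙ, ∀ j, |W j ω| ≤ M := ae_all_iff.2 hbd
  have hZbd : ∀ᵐ ω ∂ℙ, |Z ω| ≤ c := by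
    filter_upwards [hbd'] with ω h
    calc |Z ω| ≤ ∑ j ∈ Finset.range L, |γ ^ j * W j ω| :=
          Finset.abs_sum_le_sum_abs _ _
      _ ≤ ∑ j ∈ Finset.range L, γ ^ j * M := by
          apply Finset.sum_le_sum; intro j _
          rw [abs_mul, abs_pow, abs_of_nonneg hγ0]
          exact mul_le_mul_of_nonneg_left (h j) (pow_nonneg hγ0 j)
      _ = (∑ j ∈ Finset.range L, γ ^ j) * M := by rw [Finset.sum_mul]
      _ ≤ (1 / (1 - γ)) * M := mul_le_mul_of_nonneg_right hgeo hM.le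
      _ = c := by rw [hc]; ring
  -- expectation of Z
  have hEZ : (∫ ω, Z ω) ≤ -(γ * d) := by
    rw [hZ]
    rw [integral_finset_sum _ (fun j _ => (hWint j).const_mul _)]
    have hterm : ∀ j ∈ Finset.range L,
        (∫ ω, γ ^ j * W j ω) ≤ if j = 1 then -(γ * d) else 0 := by
      intro j hj
      rw [integral_const_mul]
      rcases eq_or_ne j 1 with rfl | hj1
      · simp only [if_pos rfl, pow_one]
        calc γ * ∫ ω, W 1 ω ≤ γ * (-d) := mul_le_mul_of_nonneg_left hW1 hγ0
          _ = -(γ * d) := by ring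
      · rw [if_neg hj1]
        rcases Nat.eq_zero_or_pos j with rfl | hjpos
        · simp [hW0]
        · have h1j : 1 ≤ j := hjpos
          have hjL : j ≤ L - 1 := Nat.le_sub_one_of_lt (Finset.mem_range.mp hj)
          exact mul_nonpos_of_nonneg_of_nonpos (pow_nonneg hγ0 j) (hWj j h1j hjL)
    calc (∑ j ∈ Finset.range L, ∫ ω, γ ^ j * W j ω)
        ≤ ∑ j ∈ Finset.range L, (if j = 1 then -(γ * d) else 0) :=
          Finset.sum_le_sum hterm
      _ = -(γ * d) := by
          rw [Finset.sum_ite_eq' (Finset.range L) 1 (fun _ => -(γ * d))]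
          rw [if_pos (Finset.mem_range.mpr (by omega))]
  -- expectation of |Z|
  have hEabs : (∫ ω, |Z ω|) ≤ c := by
    calc (∫ ω, |Z ω|) ≤ ∫ _ω, c := integral_mono_ae hZint.abs (integrable_const c) hZbd
      _ = c := by simp
  -- pointwise bound on the squared hinge
  have key : ∀ᵐ ω ∂ℙ, (max (Z ω) 0) ^ 2 ≤ c * ((Z ω + |Z ω|) / 2) := by
    filter_upwards [hZbd] with ω h
    have hmax : (Z ω + |Z ω|) / 2 = max (Z ω) 0 := by
      rcases le_total 0 (Z ω) with h0 | h0
      · rw [abs_of_nonneg h0, max_eq_left h0]; ring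
      · rw [abs_of_nonpos h0, max_eq_right h0]; ring
    rw [hmax, pow_two]
    apply mul_le_mul_of_nonneg_right _ (le_max_right _ _)
    exact max_le (le_trans (le_abs_self _) h) hc0.le
  have hint1 : Integrable (fun ω => (max (Z ω) 0) ^ 2) := by
    apply (integrable_const (c ^ 2)).mono'
      ((hZmeas.max measurable_const).pow_const 2).aestronglyMeasurable
    filter_upwards [hZbd] with ω h
    have h1 : |max (Z ω) 0| ≤ c :=
      abs_le.mpr ⟨by nlinarith [le_max_right (Z ω) 0], max_le (le_trans (le_abs_self _) h) hc0.le⟩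
    calc ‖(max (Z ω) 0) ^ 2‖ = |max (Z ω) 0| ^ 2 := by
          rw [Real.norm_eq_abs, abs_pow]
      _ ≤ c ^ 2 := by nlinarith [abs_nonneg (max (Z ω) 0)]
  have hint2 : Integrable (fun ω => c * ((Z ω + |Z ω|) / 2)) :=
    (((hZint.add hZint.abs).div_const 2).const_mul c)
  have step1 : (∫ ω, (max (Z ω) 0) ^ 2) ≤ c * ((-(γ * d) + c) / 2) := by
    calc (∫ ω, (max (Z ω) 0) ^ 2) ≤ ∫ ω, c * ((Z ω + |Z ω|) / 2) :=
          integral_mono_ae hint1 hint2 key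
      _ = c * (((∫ ω, Z ω) + ∫ ω, |Z ω|) / 2) := by
          rw [integral_const_mul, integral_div, integral_add hZint hZint.abs]
      _ ≤ c * ((-(γ * d) + c) / 2) := by
          apply mul_le_mul_of_nonneg_left _ hc0.le
          linarith [hEZ, hEabs]
  -- algebraic conclusion
  have hV : M ^ 2 / (1 - γ) ^ 2 = c ^ 2 := by rw [hc, div_pow]
  set S : ℝ := Real.sqrt (M ^ 2 / (1 - γ) ^ 2 + γ ^ 2 * d ^ 2) with hSdef
  have hS2 : S ^ 2 = c ^ 2 + γ ^ 2 * d ^ 2 := by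
    rw [hSdef, hV, Real.sq_sqrt (by positivity)]
  have hS0 : 0 ≤ S := Real.sqrt_nonneg _
  have hSc : c ≤ S := by nlinarith
  have hVpow : (M ^ 2 / (1 - γ) ^ 2) ^ ((3 : ℝ) / 2) = c ^ 3 := by
    rw [hV, ← Real.rpow_natCast c 2, ← Real.rpow_mul hc0.le, ← Real.rpow_natCast c 3]
    norm_num
  rw [hVpow]
  have hden : 0 < 2 * (S + γ * d) := by
    have : 0 < S := lt_of_lt_of_le hc0 hSc
    have : 0 ≤ γ * d := mul_nonneg hγ0 hd
    nlinarith
  rw [le_div_iff₀ hden]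
  calc (∫ ω, (max (Z ω) 0) ^ 2) * (2 * (S + γ * d))
      ≤ (c * ((-(γ * d) + c) / 2)) * (2 * (S + γ * d)) := by
        -- need the integral factor bounded; note c*((-(γd)+c)/2) could be compared directly
        apply mul_le_mul_of_nonneg_right step1 hden.le
    _ ≤ c ^ 3 := by nlinarith [mul_nonneg hγ0 hd, mul_nonneg (mul_nonneg hc0.le (sub_nonneg.mpr hSc)) (add_nonneg hS0 (mul_nonneg hγ0 hd))]
end

section
/- Let L ≥ 1 be a natural number, γ ∈ [0, 1), M > 0, d ≥ 0, and let W_0, …, W_L be real-valued random variables on a probability space with |W_k| ≤ M almost surely for every k, E[W_k] ≤ 0 for every 0 ≤ k ≤ L, and E[W_0] ≤ -d. Define U := Σ_{k=0}^{L} γ^k W_k and V := M²/(1-γ)². Then P(U > 0) ≤ V / (V + d²). -/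
/-!
Bounded increments give `|U| ≤ M / (1 - γ)`, hence `E[U²] ≤ V`, while discounting keeps the sign
of the means, so `E[U] ≤ E[W₀] ≤ -d`. Cantelli's one-sided inequality then bounds `P(U > 0)`:
Markov's inequality for `(U + t)²` gives `t² P(U > 0) ≤ V - 2td + t²`, and `t = (V + d²) / d`
makes the right-hand side at most `t² V / (V + d²)`.
-/

open MeasureTheory ProbabilityTheory Finset

section Cantelli

variable {Ω : Type*} [MeasurableSpace Ω] {μ : Measure Ω} [IsProbabilityMeasure μ] {X : Ω → ℝ}

lemma sq_mul_measureReal_pos_le (hX : MemLp X 2 μ) {t : ℝ} (ht : 0 < t) :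
    t ^ 2 * μ.real {ω | 0 < X ω} ≤ ∫ ω, X ω ^ 2 ∂μ + 2 * t * ∫ ω, X ω ∂μ + t ^ 2 := by
  have hXt : (fun ω => (X ω + t) ^ 2) = fun ω => X ω ^ 2 + 2 * t * X ω + t ^ 2 := by
    funext ω; ring
  have hlin : Integrable (fun ω => X ω ^ 2 + 2 * t * X ω) μ :=
    hX.integrable_sq.add ((hX.integrable one_le_two).const_mul _)
  calc t ^ 2 * μ.real {ω | 0 < X ω} ≤ t ^ 2 * μ.real {ω | t ^ 2 ≤ (X ω + t) ^ 2} := by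
        refine mul_le_mul_of_nonneg_left ?_ (sq_nonneg t)
        refine measureReal_mono fun ω (hω : 0 < X ω) => ?_
        show t ^ 2 ≤ (X ω + t) ^ 2
        nlinarith
    _ ≤ ∫ ω, (X ω + t) ^ 2 ∂μ := by
        refine mul_meas_ge_le_integral_of_nonneg (ae_of_all _ fun ω => sq_nonneg _) ?_ _
        rw [hXt]
        exact hlin.add (integrable_const _)
    _ = ∫ ω, X ω ^ 2 ∂μ + 2 * t * ∫ ω, X ω ∂μ + t ^ 2 := by
        rw [hXt, integral_add hlin (integrable_const _),
          integral_add hX.integrable_sq ((hX.integrable one_le_two).const_mul _),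
          integral_const_mul, integral_const]
        simp

lemma measureReal_pos_le_of_integral_le_of_integral_sq_le (hX : MemLp X 2 μ) {d s : ℝ}
    (hd : 0 ≤ d) (hs : 0 < s) (hmean : ∫ ω, X ω ∂μ ≤ -d) (hsq : ∫ ω, X ω ^ 2 ∂μ ≤ s) :
    μ.real {ω | 0 < X ω} ≤ s / (s + d ^ 2) := by
  obtain rfl | hd := hd.eq_or_lt
  · simp [hs.ne']
  set P := μ.real {ω | 0 < X ω}
  set t := (s + d ^ 2) / d
  have htd : t * d = s + d ^ 2 := div_mul_cancel₀ _ hd.ne'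
  have ht : 0 < t := by positivity
  have hP : t ^ 2 * P ≤ t ^ 2 - s - 2 * d ^ 2 := by
    linarith [sq_mul_measureReal_pos_le hX ht,
      mul_le_mul_of_nonneg_left hmean (by positivity : 0 ≤ 2 * t)]
  have hP' : (s + d ^ 2) ^ 2 * P ≤ (s + d ^ 2) ^ 2 - (s + 2 * d ^ 2) * d ^ 2 := by
    rw [← htd]
    nlinarith [mul_le_mul_of_nonneg_right hP (sq_nonneg d)]
  rw [le_div_iff₀ (by positivity)]
  nlinarith [pow_pos hd 4]

end Cantelli

lemma abs_sum_pow_mul_le {γ M : ℝ} (hγ0 : 0 ≤ γ) (hγ1 : γ < 1) {w : ℕ → ℝ}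
    (hw : ∀ k, |w k| ≤ M) (n : ℕ) :
    |∑ k ∈ range n, γ ^ k * w k| ≤ M / (1 - γ) :=
  calc |∑ k ∈ range n, γ ^ k * w k| ≤ ∑ k ∈ range n, γ ^ k * M := by
        refine (abs_sum_le_sum_abs _ _).trans (sum_le_sum fun k _ => ?_)
        rw [abs_mul, abs_of_nonneg (pow_nonneg hγ0 k)]
        exact mul_le_mul_of_nonneg_left (hw k) (pow_nonneg hγ0 k)
    _ = (∑ k ∈ range n, γ ^ k) * M := (sum_mul ..).symm
    _ ≤ 1 / (1 - γ) * M := by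
        gcongr
        · exact (abs_nonneg _).trans (hw 0)
        · simpa using geom_sum_Ico_le_of_lt_one (m := 0) (n := n) hγ0 hγ1
    _ = M / (1 - γ) := one_div_mul_eq_div _ _

lemma sum_pow_mul_le_of_nonpos_of_le_neg {γ d : ℝ} (hγ : 0 ≤ γ) {a : ℕ → ℝ} {L : ℕ}
    (ha : ∀ k ≤ L, a k ≤ 0) (ha0 : a 0 ≤ -d) :
    ∑ k ∈ range (L + 1), γ ^ k * a k ≤ -d := by
  rw [sum_range_succ', pow_zero, one_mul]
  have htail : ∑ k ∈ range L, γ ^ (k + 1) * a (k + 1) ≤ 0 :=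
    sum_nonpos fun k hk =>
      mul_nonpos_of_nonneg_of_nonpos (pow_nonneg hγ _) (ha _ (by simp at hk; omega))
  linarith

theorem ub_false_penalty_prob_general {Ω : Type*} [MeasureSpace Ω]
    [IsProbabilityMeasure (ℙ : Measure Ω)]
    (L : ℕ) (γ M d : ℝ) (hγ0 : 0 ≤ γ) (hγ1 : γ < 1) (hM : 0 < M) (hd : 0 ≤ d)
    (W : ℕ → Ω → ℝ) (hmeas : ∀ k, Measurable (W k))
    (hbd : ∀ k, ∀ᵐ ω ∂ℙ, |W k ω| ≤ M)
    (hWk : ∀ k, k ≤ L → (∫ ω, W k ω) ≤ 0)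
    (hW0 : (∫ ω, W 0 ω) ≤ -d) :
    (ℙ {ω | 0 < ∑ k ∈ Finset.range (L + 1), γ ^ k * W k ω}).toReal ≤
      (M ^ 2 / (1 - γ) ^ 2) / (M ^ 2 / (1 - γ) ^ 2 + d ^ 2) := by
  set U : Ω → ℝ := fun ω => ∑ k ∈ range (L + 1), γ ^ k * W k ω
  have hWint (k : ℕ) : Integrable (W k) :=
    .of_bound (hmeas k).aestronglyMeasurable M (hbd k)
  have hUbd : ∀ᵐ ω ∂ℙ, |U ω| ≤ M / (1 - γ) := by
    filter_upwards [ae_all_iff.2 hbd] with ω hω using abs_sum_pow_mul_le hγ0 hγ1 hω _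
  have hU : MemLp U 2 :=
    (memLp_top_of_bound (by fun_prop) _ hUbd).mono_exponent le_top
  have hmean : ∫ ω, U ω ≤ -d := by
    simp only [U, integral_finsetSum _ fun k _ => (hWint k).const_mul _, integral_const_mul]
    exact sum_pow_mul_le_of_nonpos_of_le_neg hγ0 hWk hW0
  have hsq : ∫ ω, U ω ^ 2 ≤ (M / (1 - γ)) ^ 2 := by
    calc ∫ ω, U ω ^ 2 ≤ ∫ _, (M / (1 - γ)) ^ 2 := by
          refine integral_mono_ae hU.integrable_sq (integrable_const _) ?_
          filter_upwards [hUbd] with ω hω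
          simpa only [sq_abs] using pow_le_pow_left₀ (abs_nonneg _) hω 2
      _ = (M / (1 - γ)) ^ 2 := by simp
  rw [← div_pow]
  exact measureReal_pos_le_of_integral_le_of_integral_sq_le hU hd
    (by have := sub_pos.2 hγ1; positivity) hmean hsq

/-- Probability of a false UB hinge penalty: with `|W_k| ≤ M` a.s., `E[W_k] ≤ 0` for
all `0 ≤ k ≤ L`, `E[W_0] ≤ -d`, `U = Σ_{k≤L} γ^k W_k`, and `V = M²/(1-γ)²`,
we have `P(U > 0) ≤ V / (V + d²)`. -/
theorem ub_false_penalty_prob {Ω : Type*} [MeasureSpace Ω]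
    [IsProbabilityMeasure (ℙ : Measure Ω)]
    (L : ℕ) (hL : 1 ≤ L) (γ M d : ℝ) (hγ0 : 0 ≤ γ) (hγ1 : γ < 1) (hM : 0 < M) (hd : 0 ≤ d)
    (W : ℕ → Ω → ℝ) (hmeas : ∀ k, Measurable (W k))
    (hbd : ∀ k, ∀ᵐ ω ∂ℙ, |W k ω| ≤ M)
    (hWk : ∀ k, k ≤ L → (∫ ω, W k ω) ≤ 0)
    (hW0 : (∫ ω, W 0 ω) ≤ -d) :
    (ℙ {ω | 0 < ∑ k ∈ Finset.range (L + 1), γ ^ k * W k ω}).toReal ≤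
      (M ^ 2 / (1 - γ) ^ 2) / (M ^ 2 / (1 - γ) ^ 2 + d ^ 2) :=
  ub_false_penalty_prob_general L γ M d hγ0 hγ1 hM hd W hmeas hbd hWk hW0
end

section
/- Let L ≥ 1 be a natural number, γ ∈ [0, 1), M > 0, d ≥ 0, and let W_0, …, W_L be real-valued random variables on a probability space with |W_k| ≤ M almost surely for every k, E[W_k] ≤ 0 for every 0 ≤ k ≤ L, and E[W_0] ≤ -d. Define U := Σ_{k=0}^{L} γ^k W_k and V := M²/(1-γ)². Then E[[U]_+²] ≤ V^{3/2} / (2(√(V + d²) + d)). -/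
open MeasureTheory ProbabilityTheory

set_option maxHeartbeats 1000000 in
/-- Expected squared false UB hinge penalty: with `|W_k| ≤ M` a.s., `E[W_k] ≤ 0` for
all `0 ≤ k ≤ L`, `E[W_0] ≤ -d`, `U = Σ_{k≤L} γ^k W_k`, and `V = M²/(1-γ)²`,
we have `E[[U]₊²] ≤ V^{3/2} / (2(√(V + d²) + d))`. -/
theorem ub_false_penalty_sq_expectation {Ω : Type*} [MeasureSpace Ω]
    [IsProbabilityMeasure (ℙ : Measure Ω)]
    (L : ℕ) (hL : 1 ≤ L) (γ M d : ℝ) (hγ0 : 0 ≤ γ) (hγ1 : γ < 1) (hM : 0 < M) (hd : 0 ≤ d)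
    (W : ℕ → Ω → ℝ) (hmeas : ∀ k, Measurable (W k))
    (hbd : ∀ k, ∀ᵐ ω ∂ℙ, |W k ω| ≤ M)
    (hWk : ∀ k, k ≤ L → (∫ ω, W k ω) ≤ 0)
    (hW0 : (∫ ω, W 0 ω) ≤ -d) :
    (∫ ω, (max (∑ k ∈ Finset.range (L + 1), γ ^ k * W k ω) 0) ^ 2) ≤
      (M ^ 2 / (1 - γ) ^ 2) ^ ((3 : ℝ) / 2) /
        (2 * (Real.sqrt (M ^ 2 / (1 - γ) ^ 2 + d ^ 2) + d)) := by
  have h1γ : 0 < 1 - γ := by linarith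
  set B : ℝ := M / (1 - γ) with hB
  have hBpos : 0 < B := div_pos hM h1γ
  have hB2 : M ^ 2 / (1 - γ) ^ 2 = B ^ 2 := by rw [hB, div_pow]
  rw [hB2]
  set lam : ℝ := Real.sqrt (B ^ 2 + d ^ 2) with hlam
  have hlam_sq : lam ^ 2 = B ^ 2 + d ^ 2 := Real.sq_sqrt (by positivity)
  have hlam_pos : 0 < lam := Real.sqrt_pos.mpr (by positivity)
  have hrpow : (B ^ 2 : ℝ) ^ ((3 : ℝ) / 2) = B ^ 3 := by
    rw [← Real.rpow_natCast B 2, ← Real.rpow_mul hBpos.le]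
    norm_num
  rw [hrpow]
  set U : Ω → ℝ := fun ω => ∑ k ∈ Finset.range (L + 1), γ ^ k * W k ω with hU
  have hUmeas : Measurable U := by
    apply Finset.measurable_sum
    exact fun k _ => (hmeas k).const_mul _
  -- integrability helper
  have integ_of_bd : ∀ (f : Ω → ℝ) (C : ℝ), Measurable f → (∀ᵐ ω ∂ℙ, |f ω| ≤ C) →
      Integrable f ℙ := by
    intro f C hf hC
    exact ⟨hf.aestronglyMeasurable,
      HasFiniteIntegral.of_bounded (C := C) (hC.mono fun ω h => by simpa using h)⟩
  have hint_k : ∀ k, Integrable (W k) ℙ := fun k => integ_of_bd _ M (hmeas k) (hbd k)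
  -- geometric sum bound
  have hgeom : ∑ k ∈ Finset.range (L + 1), γ ^ k ≤ 1 / (1 - γ) := by
    have h := geom_sum_mul γ (L + 1)
    have hpow : 0 ≤ γ ^ (L + 1) := pow_nonneg hγ0 _
    rw [le_div_iff₀ h1γ]
    nlinarith [h]
  -- a.e. bound on U
  have hbdall : ∀ᵐ ω ∂ℙ, ∀ k, |W k ω| ≤ M := ae_all_iff.mpr hbd
  have hUbd : ∀ᵐ ω ∂ℙ, |U ω| ≤ B := by
    filter_upwards [hbdall] with ω h
    calc |U ω| ≤ ∑ k ∈ Finset.range (L + 1), |γ ^ k * W k ω| :=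
          Finset.abs_sum_le_sum_abs _ _
      _ ≤ ∑ k ∈ Finset.range (L + 1), γ ^ k * M := by
          apply Finset.sum_le_sum
          intro k _
          rw [abs_mul, abs_pow, abs_of_nonneg hγ0]
          exact mul_le_mul_of_nonneg_left (h k) (pow_nonneg hγ0 k)
      _ = (∑ k ∈ Finset.range (L + 1), γ ^ k) * M := by rw [Finset.sum_mul]
      _ ≤ (1 / (1 - γ)) * M := mul_le_mul_of_nonneg_right hgeom hM.le
      _ = B := by rw [hB]; ring
  have hUint : Integrable U ℙ := integ_of_bd U B hUmeas hUbd
  -- mean of U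
  have hUval : (∫ ω, U ω) = ∑ k ∈ Finset.range (L + 1), γ ^ k * ∫ ω, W k ω := by
    rw [hU]
    rw [integral_finset_sum _ (fun k _ => (hint_k k).const_mul _)]
    simp [integral_const_mul]
  have hUmean : (∫ ω, U ω) ≤ -d := by
    rw [hUval, Finset.sum_range_succ']
    have h0 : γ ^ 0 * (∫ ω, W 0 ω) ≤ -d := by simpa using hW0
    have hrest : ∑ k ∈ Finset.range L, γ ^ (k + 1) * ∫ ω, W (k + 1) ω ≤ 0 := by
      apply Finset.sum_nonpos
      intro k hk
      exact mul_nonpos_of_nonneg_of_nonpos (pow_nonneg hγ0 _)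
        (hWk (k + 1) (Finset.mem_range.mp hk))
    linarith
  -- second moment of U
  have hU2int : Integrable (fun ω => (U ω) ^ 2) ℙ := by
    apply integ_of_bd _ (B ^ 2) (hUmeas.pow_const 2)
    filter_upwards [hUbd] with ω h
    rw [abs_of_nonneg (sq_nonneg _)]
    have := abs_le.mp h
    nlinarith
  have hU2 : (∫ ω, (U ω) ^ 2) ≤ B ^ 2 := by
    calc (∫ ω, (U ω) ^ 2) ≤ ∫ _, (B ^ 2 : ℝ) := by
          apply integral_mono_ae hU2int (integrable_const _)
          filter_upwards [hUbd] with ω h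
          have := abs_le.mp h
          nlinarith
      _ = B ^ 2 := by simp
  -- integrability of hinge square and shifted square
  have hmax_int : Integrable (fun ω => (max (U ω) 0) ^ 2) ℙ := by
    apply integ_of_bd _ (B ^ 2) ((hUmeas.max measurable_const).pow_const 2)
    filter_upwards [hUbd] with ω h
    rw [abs_of_nonneg (sq_nonneg _)]
    have h1 := (abs_le.mp h).2
    have h2 : 0 ≤ max (U ω) 0 := le_max_right _ _
    have h3 : max (U ω) 0 ≤ B := max_le h1 hBpos.le
    nlinarith
  have hexp : (fun ω => (U ω + lam) ^ 2) =
      (fun ω => (U ω) ^ 2 + (2 * lam * U ω + lam ^ 2)) := by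
    funext ω; ring
  have hsq_int : Integrable (fun ω => (U ω + lam) ^ 2) ℙ := by
    rw [hexp]
    exact hU2int.add ((hUint.const_mul _).add (integrable_const _))
  -- key pointwise/integral step
  have key : (∫ ω, (max (U ω) 0) ^ 2) ≤ B / (4 * lam) * ∫ ω, (U ω + lam) ^ 2 := by
    rw [← integral_const_mul]
    apply integral_mono_ae hmax_int (hsq_int.const_mul _)
    filter_upwards [hUbd] with ω h
    have h1 := (abs_le.mp h).2
    have h2 : 0 ≤ max (U ω) 0 := le_max_right _ _
    have h3 : max (U ω) 0 ≤ B := max_le h1 hBpos.le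
    have h4 : 4 * lam * max (U ω) 0 ≤ (U ω + lam) ^ 2 := by
      rcases le_or_gt (U ω) 0 with hu | hu
      · rw [max_eq_right hu]
        simpa using sq_nonneg (U ω + lam)
      · rw [max_eq_left hu.le]; nlinarith [sq_nonneg (U ω - lam)]
    have hnn : (0:ℝ) ≤ 4 * lam * max (U ω) 0 := mul_nonneg (by positivity) h2
    rw [div_mul_eq_mul_div, le_div_iff₀ (by positivity)]
    calc (max (U ω) 0) ^ 2 * (4 * lam) = (4 * lam * max (U ω) 0) * max (U ω) 0 := by ring
      _ ≤ (4 * lam * max (U ω) 0) * B := mul_le_mul_of_nonneg_left h3 hnn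
      _ = B * (4 * lam * max (U ω) 0) := by ring
      _ ≤ B * (U ω + lam) ^ 2 := mul_le_mul_of_nonneg_left h4 hBpos.le
  -- value of shifted second moment
  have hval : (∫ ω, (U ω + lam) ^ 2) =
      (∫ ω, (U ω) ^ 2) + 2 * lam * (∫ ω, U ω) + lam ^ 2 := by
    have hg : Integrable (fun ω => 2 * lam * U ω + lam ^ 2) ℙ :=
      (hUint.const_mul (2 * lam)).add (integrable_const _)
    rw [hexp, integral_add hU2int hg,
      integral_add (hUint.const_mul (2 * lam)) (integrable_const (lam ^ 2)),
      integral_const_mul, integral_const]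
    simp [measure_univ]
    ring
  have hbound2 : (∫ ω, (U ω + lam) ^ 2) ≤ B ^ 2 - 2 * lam * d + lam ^ 2 := by
    rw [hval]
    nlinarith [mul_le_mul_of_nonneg_left hUmean (by positivity : (0:ℝ) ≤ 2 * lam)]
  calc (∫ ω, (max (U ω) 0) ^ 2) ≤ B / (4 * lam) * ∫ ω, (U ω + lam) ^ 2 := key
    _ ≤ B / (4 * lam) * (B ^ 2 - 2 * lam * d + lam ^ 2) :=
        mul_le_mul_of_nonneg_left hbound2 (by positivity)
    _ ≤ B ^ 3 / (2 * (lam + d)) := by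
        rw [div_mul_eq_mul_div, div_le_div_iff₀ (by positivity) (by positivity)]
        have hid : B ^ 3 * (4 * lam) - B * (B ^ 2 - 2 * lam * d + lam ^ 2) * (2 * (lam + d))
            = 2 * B * d ^ 2 * (lam + d) := by
          linear_combination (2 * B * d - 2 * B * lam) * hlam_sq
        have hpos : 0 ≤ 2 * B * d ^ 2 * (lam + d) := by positivity
        linarith
end
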